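/- Let G be an acyclic transitive digraph on a finite vertex set V and let H be an orientation of the complement of G. Then G \ ucl(tcl(H)) is a transitive orientation of the complement of tcl(H). -/

import Mathlib

/-- Undirected closure of a digraph: `E ∪ E⁻¹`. -/
def ucl {V : Type*} (E : V → V → Prop) : V → V → Prop := fun a b => E a b ∨ E b a

/-- Complement of a digraph: all pairs of distinct vertices not in `ucl E`. -/
def cmpl {V : Type*} (E : V → V → Prop) : V → V → Prop := fun a b => a ≠ b ∧ ¬ ucl E a b

/-- A digraph is oriented iff `E ∩ E⁻¹ = ∅`. -/
def Oriented {V : Type*} (E : V → V → Prop) : Prop := ∀ a b, E a b → ¬ E b a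

/-- `O` is an orientation of `E`: a maximal oriented subset of `E`. -/
def IsOrientation {V : Type*} (O E : V → V → Prop) : Prop :=
  (∀ a b, O a b → E a b) ∧ Oriented O ∧
    ∀ O' : V → V → Prop, (∀ a b, O' a b → E a b) → Oriented O' →
      (∀ a b, O a b → O' a b) → ∀ a b, O' a b → O a b

/-- Transitivity of a digraph: `(a,b) ∈ E`, `(b,c) ∈ E` and `a ≠ c` imply `(a,c) ∈ E`. -/
def TransD {V : Type*} (E : V → V → Prop) : Prop :=
  ∀ a b c, E a b → E b c → a ≠ c → E a c

/-- Transitive closure of a digraph. -/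
def tcl {V : Type*} (E : V → V → Prop) : V → V → Prop := Relation.TransGen E

/-- A digraph is acyclic iff its transitive closure is irreflexive. -/
def Acyclic {V : Type*} (E : V → V → Prop) : Prop := Irreflexive (tcl E)

/-- A transitive orientation of `E` is an orientation of `E` that is transitive. -/
def IsTransOrientation {V : Type*} (O E : V → V → Prop) : Prop :=
  IsOrientation O E ∧ TransD O

/-- `E` is transitively orientable iff it has a transitive orientation. -/
def TransOrientable {V : Type*} (E : V → V → Prop) : Prop := ∃ O, IsTransOrientation O E

/-- `L` is a strict linear order on the vertex set. -/
def IsStrictLinear {V : Type*} (L : V → V → Prop) : Prop :=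
  Irreflexive L ∧ Transitive L ∧ ∀ a b : V, a ≠ b → L a b ∨ L b a

/-- `E` is 2-dimensional: the intersection of two strict linear orders. -/
def TwoDim {V : Type*} (E : V → V → Prop) : Prop :=
  ∃ L₁ L₂ : V → V → Prop, IsStrictLinear L₁ ∧ IsStrictLinear L₂ ∧
    ∀ a b, E a b ↔ L₁ a b ∧ L₂ a b

/-- Direct forcing `Γ` between edges of an undirected graph `E`:
`(a,b) Γ (c,d)` iff both are edges of `E` and either `a = c` with `b, d` non-adjacent,
or `b = d` with `a, c` non-adjacent. -/
def Forces {V : Type*} (E : V → V → Prop) (e f : V × V) : Prop :=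
  E e.1 e.2 ∧ E f.1 f.2 ∧
    ((e.1 = f.1 ∧ e.2 ≠ f.2 ∧ ¬ E e.2 f.2) ∨ (e.2 = f.2 ∧ e.1 ≠ f.1 ∧ ¬ E e.1 f.1))

/-- `S` is a 2-dimensional subgraph of `G`: a subgraph that is a 2-dimensional
acyclic transitive digraph. -/
def TwoDimSubgraph {V : Type*} (G S : V → V → Prop) : Prop :=
  (∀ a b, S a b → G a b) ∧ Irreflexive S ∧ TransD S ∧ Acyclic S ∧ TwoDim S

/-- A permutation graph: an undirected graph such that both it and its complement
are transitively orientable. -/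
def PermGraph {V : Type*} (E : V → V → Prop) : Prop :=
  Irreflexive E ∧ (∀ a b, E a b → E b a) ∧ TransOrientable E ∧ TransOrientable (cmpl E)

/-- `S` is a permutation subgraph of `G`: an undirected subgraph of `G` that is a
permutation graph. -/
def PermSubgraph {V : Type*} (G S : V → V → Prop) : Prop :=
  (∀ a b, S a b → G a b) ∧ PermGraph S

/-!
Write `K` for `tcl H`. Every pair of distinct vertices lies in `ucl G` or in `ucl H ⊆ ucl K`,
so `G \ ucl K` is a maximal oriented part of `cmpl K`. For transitivity, the key observation is
that an `H`-edge `x → y` leaving a `G`-predecessor `x` of `b` lands on another `G`-predecessor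
of `b` unless `y` and `b` are `H`-adjacent (a `G`-edge `b → y` would give `G x y` by
transitivity). Following a `K`-path from `a` to `c` that is `K`-unrelated to `b` therefore
turns `G a b` into `G c b`, which contradicts `G b c` in an acyclic `G`.
-/

section

variable {V : Type*} {G H K O E : V → V → Prop}

lemma Acyclic.irreflexive (h : Acyclic G) : Irreflexive G :=
  fun a ha => h a (.single ha)

lemma Acyclic.oriented (h : Acyclic G) : Oriented G :=
  fun a _ hab hba => h a (.head hab (.single hba))

lemma TransD.flip (h : TransD G) : TransD (flip G) :=
  fun a b c hab hbc hac => h c b a hbc hab hac.symm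

lemma cmpl_flip : cmpl (flip G) = cmpl G := by
  funext a b
  simp only [cmpl, ucl, flip, or_comm]

lemma IsOrientation.or_swap (hO : IsOrientation O E) {a b : V} (hab : E a b) (hne : a ≠ b) :
    O a b ∨ O b a := by
  obtain ⟨hsub, hor, hmax⟩ := hO
  by_contra! hnot
  refine hnot.1 (hmax (fun x y => O x y ∨ (x = a ∧ y = b)) ?_ ?_ (fun _ _ => .inl) a b
    (.inr ⟨rfl, rfl⟩))
  · rintro x y (h | ⟨rfl, rfl⟩)
    exacts [hsub x y h, hab]
  · rintro x y (h | ⟨rfl, rfl⟩) (h' | ⟨rfl, hx⟩)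
    exacts [hor x y h h', hnot.2 (hx ▸ h), hnot.2 h', hne rfl]

lemma isOrientation_sdiff_ucl (hG : Oriented G) (hirr : Irreflexive G)
    (hcover : ∀ a b, a ≠ b → ¬ ucl K a b → ucl G a b) :
    IsOrientation (fun a b => G a b ∧ ¬ ucl K a b) (cmpl K) := by
  refine ⟨fun a b h => ⟨fun he => hirr a (he ▸ h.1), h.2⟩,
    fun a b h h' => hG a b h.1 h'.1, ?_⟩
  intro O' hsub hor hle a b hab
  obtain ⟨hne, hK⟩ := hsub a b hab
  refine ⟨?_, hK⟩
  rcases hcover a b hne hK with hGab | hGba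
  · exact hGab
  · exact absurd (hle b a ⟨hGba, fun h => hK h.symm⟩) (hor a b hab)

lemma rel_or_ucl_of_isOrientation_cmpl (htrans : TransD G) (hH : IsOrientation H (cmpl G))
    {x y b : V} (hxb : G x b) (hxy : H x y) (hyb : y ≠ b) : G y b ∨ ucl H y b := by
  obtain ⟨hne, hGxy⟩ := hH.1 x y hxy
  by_cases hGyb : G y b
  · exact .inl hGyb
  have hGby : ¬ G b y := fun h => hGxy (.inl (htrans x b y hxb h hne))
  exact .inr (hH.or_swap ⟨hyb, not_or.2 ⟨hGyb, hGby⟩⟩ hyb)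

lemma rel_of_tcl_of_isOrientation_cmpl (htrans : TransD G) (hH : IsOrientation H (cmpl G))
    {a b c : V} (hab : G a b) (hac : tcl H a c) (hnab : ¬ tcl H a b) (hnbc : ¬ tcl H b c) :
    G c b := by
  induction hac with
  | @single c hac =>
    have hcb : c ≠ b := by rintro rfl; exact hnab (.single hac)
    rcases rel_or_ucl_of_isOrientation_cmpl htrans hH hab hac hcb with h | h | h
    exacts [h, absurd (.tail (.single hac) h) hnab, absurd (.single h) hnbc]
  | @tail x c hax hxc ih =>
    have hcb : c ≠ b := by rintro rfl; exact hnab (.tail hax hxc)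
    have hxb := ih (fun h => hnbc (.tail h hxc))
    rcases rel_or_ucl_of_isOrientation_cmpl htrans hH hxb hxc hcb with h | h | h
    exacts [h, absurd (.tail (.tail hax hxc) h) hnab, absurd (.single h) hnbc]

end

theorem induced_subgraph_is_transitive_orientation_general
    {V : Type*} (G H : V → V → Prop)
    (hacyc : Acyclic G) (htrans : TransD G)
    (hH : IsOrientation H (cmpl G)) :
    IsTransOrientation (fun a b => G a b ∧ ¬ ucl (tcl H) a b) (cmpl (tcl H)) := by
  have hcover : ∀ a b, a ≠ b → ¬ ucl (tcl H) a b → ucl G a b := fun a b hne hK => by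
    by_contra hG
    rcases hH.or_swap ⟨hne, hG⟩ hne with h | h
    exacts [hK (.inl (.single h)), hK (.inr (.single h))]
  refine ⟨isOrientation_sdiff_ucl hacyc.oriented hacyc.irreflexive hcover, ?_⟩
  rintro a b c ⟨hab, hnab⟩ ⟨hbc, hnbc⟩ hac
  refine ⟨htrans a b c hab hbc hac, ?_⟩
  rintro (hK | hK)
  · exact hacyc.oriented b c hbc
      (rel_of_tcl_of_isOrientation_cmpl htrans hH hab hK (hnab <| .inl ·) (hnbc <| .inl ·))
  · exact hacyc.oriented a b hab
      (rel_of_tcl_of_isOrientation_cmpl htrans.flip (cmpl_flip ▸ hH) hbc hK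
        (hnbc <| .inr ·) (hnab <| .inr ·))

theorem induced_subgraph_is_transitive_orientation
    {V : Type*} [Fintype V] (G H : V → V → Prop)
    (hirr : Irreflexive G) (hacyc : Acyclic G) (htrans : TransD G)
    (hH : IsOrientation H (cmpl G)) :
    IsTransOrientation (fun a b => G a b ∧ ¬ ucl (tcl H) a b) (cmpl (tcl H)) :=
  induced_subgraph_is_transitive_orientation_general G H hacyc htrans hH
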